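/- arXiv:1905.10256 — 6 statements merged into one kernel-verified Lean document; each statement's English description precedes it below -/
import Mathlib

section
/- Let T be a triangulated category and F : A → T an additive functor from an additive category A. The cone functor Cone : (T ↓ F) → (F ↓ T)/RT, sending an object (Y, A; g) to (A, X; f) where Y →g F(A) →f X → ΣY is an exact triangle, and a morphism (c, a) to the induced morphism (a, b) obtained from axiom (TR3), is a well-defined functor; that is, the class of b modulo right-trivial morphisms does not depend on the choice of b. -/
open CategoryTheory Category Limits Pretriangulated

variable {A : Type*} [Category A] [Preadditive A]
variable {T : Type*} [Category T] [HasZeroObject T] [Preadditive T] [HasShift T ℤ]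
  [∀ n : ℤ, (shiftFunctor T n).Additive] [Pretriangulated T]

namespace CategoryTheory.Pretriangulated

lemma exists_sub_eq_comp_mor₂_of_comp_mor₃_eq
    {K : Triangle T} (hK : K ∈ distTriang T) {X : T} (b b' : X ⟶ K.obj₃)
    (hb : b ≫ K.mor₃ = b' ≫ K.mor₃) : ∃ k : X ⟶ K.obj₂, b - b' = k ≫ K.mor₂ :=
  Triangle.coyoneda_exact₃ K hK (b - b') (by rw [Preadditive.sub_comp, hb, sub_self])

end CategoryTheory.Pretriangulated

theorem cone_functor_well_defined_general (F : A ⥤ T)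
    {Y Y' X X' : T} {A₀ A₁ : A}
    (g : Y ⟶ F.obj A₀) (f : F.obj A₀ ⟶ X) (h : X ⟶ Y⟦(1 : ℤ)⟧)
    (g' : Y' ⟶ F.obj A₁) (f' : F.obj A₁ ⟶ X') (h' : X' ⟶ Y'⟦(1 : ℤ)⟧)
    (ht : Triangle.mk g f h ∈ distTriang T)
    (ht' : Triangle.mk g' f' h' ∈ distTriang T)
    (c : Y ⟶ Y') (a : A₀ ⟶ A₁) (hc : g ≫ F.map a = c ≫ g') :
    (∃ b : X ⟶ X', F.map a ≫ f' = f ≫ b ∧ b ≫ h' = h ≫ c⟦(1 : ℤ)⟧') ∧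
    (∀ b b' : X ⟶ X',
      (F.map a ≫ f' = f ≫ b ∧ b ≫ h' = h ≫ c⟦(1 : ℤ)⟧') →
      (F.map a ≫ f' = f ≫ b' ∧ b' ≫ h' = h ≫ c⟦(1 : ℤ)⟧') →
      ∃ k : X ⟶ F.obj A₁, b - b' = k ≫ f') := by
  constructor
  · obtain ⟨b, hb₁, hb₂⟩ := complete_distinguished_triangle_morphism _ _ ht ht' c (F.map a) hc
    exact ⟨b, hb₁.symm, hb₂.symm⟩
  · rintro b b' ⟨-, hb⟩ ⟨-, hb'⟩
    exact exists_sub_eq_comp_mor₂_of_comp_mor₃_eq ht' b b' (hb.trans hb'.symm)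

/-- The cone functor `(T ↓ F) → (F ↓ T)/RT` is well defined: given exact triangles
`Y → F A₀ → X → ΣY` and `Y' → F A₁ → X' → ΣY'` and a morphism `(c, a) : (Y, A₀; g) → (Y', A₁; g')`,
a filler `b : X → X'` of the (TR3) diagram exists, and any two such fillers differ by a
morphism factoring through `f'`, i.e. by a right trivial morphism. -/
theorem cone_functor_well_defined (F : A ⥤ T) [F.Additive]
    {Y Y' X X' : T} {A₀ A₁ : A}
    (g : Y ⟶ F.obj A₀) (f : F.obj A₀ ⟶ X) (h : X ⟶ Y⟦(1 : ℤ)⟧)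
    (g' : Y' ⟶ F.obj A₁) (f' : F.obj A₁ ⟶ X') (h' : X' ⟶ Y'⟦(1 : ℤ)⟧)
    (ht : Triangle.mk g f h ∈ distTriang T)
    (ht' : Triangle.mk g' f' h' ∈ distTriang T)
    (c : Y ⟶ Y') (a : A₀ ⟶ A₁) (hc : g ≫ F.map a = c ≫ g') :
    (∃ b : X ⟶ X', F.map a ≫ f' = f ≫ b ∧ b ≫ h' = h ≫ c⟦(1 : ℤ)⟧') ∧
    (∀ b b' : X ⟶ X',
      (F.map a ≫ f' = f ≫ b ∧ b ≫ h' = h ≫ c⟦(1 : ℤ)⟧') →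
      (F.map a ≫ f' = f ≫ b' ∧ b' ≫ h' = h ≫ c⟦(1 : ℤ)⟧') →
      ∃ k : X ⟶ F.obj A₁, b - b' = k ≫ f') :=
  cone_functor_well_defined_general F g f h g' f' h' ht ht' c a hc
end

section
/- Let T be a triangulated category and F : A → T an additive functor. The induced cone functor Cone : (T ↓ F)/LT → (F ↓ T)/RT is an equivalence of categories. In particular, in a commutative diagram coming from (TR3) relating triangles Y → F(A) → X → ΣY and Y' → F(A') → X' → ΣY', the morphism (c,a) is left trivial if and only if the induced morphism (a,b) is right trivial. -/
open CategoryTheory Category Limits Pretriangulated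

variable {A : Type*} [Category A] [Preadditive A]
variable {T : Type*} [Category T] [HasZeroObject T] [Preadditive T] [HasShift T ℤ]
  [∀ n : ℤ, (shiftFunctor T n).Additive] [Pretriangulated T]

lemma Triangle.yoneda_exact₁ (T₀ : Triangle T) (hT₀ : T₀ ∈ distTriang T) {X : T}
    (f : T₀.obj₁ ⟶ X) (hf : T₀.mor₃ ≫ f⟦(1 : ℤ)⟧' = 0) :
    ∃ g : T₀.obj₂ ⟶ X, f = T₀.mor₁ ≫ g := by
  obtain ⟨ψ, hψ⟩ : ∃ ψ : T₀.obj₂⟦(1 : ℤ)⟧ ⟶ X⟦(1 : ℤ)⟧,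
      f⟦(1 : ℤ)⟧' = (-T₀.mor₁⟦(1 : ℤ)⟧') ≫ ψ :=
    Triangle.yoneda_exact₃ _ (rot_of_distTriang _ hT₀) (f⟦(1 : ℤ)⟧') hf
  refine ⟨(shiftFunctor T (1 : ℤ)).preimage (-ψ), (shiftFunctor T (1 : ℤ)).map_injective ?_⟩
  rw [Functor.map_comp, Functor.map_preimage, Preadditive.comp_neg, ← Preadditive.neg_comp]
  exact hψ

lemma Triangle.exists_eq_mor₁_comp_iff_exists_eq_comp_mor₂ {T₁ T₂ : Triangle T}
    (hT₁ : T₁ ∈ distTriang T) (hT₂ : T₂ ∈ distTriang T) {c : T₁.obj₁ ⟶ T₂.obj₁}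
    {b : T₁.obj₃ ⟶ T₂.obj₃} (comm : T₁.mor₃ ≫ c⟦(1 : ℤ)⟧' = b ≫ T₂.mor₃) :
    (∃ s : T₁.obj₂ ⟶ T₂.obj₁, c = T₁.mor₁ ≫ s) ↔
      ∃ t : T₁.obj₃ ⟶ T₂.obj₂, b = t ≫ T₂.mor₂ := by
  constructor
  · rintro ⟨s, rfl⟩
    refine Triangle.coyoneda_exact₃ _ hT₂ b ?_
    rw [← comm, Functor.map_comp, ← assoc, comp_distTriang_mor_zero₃₁ _ hT₁, zero_comp]
  · rintro ⟨t, rfl⟩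
    refine Triangle.yoneda_exact₁ _ hT₁ c ?_
    rw [comm, assoc, comp_distTriang_mor_zero₂₃ _ hT₂, comp_zero]

theorem cone_functor_equivalence_general (F : A ⥤ T) :
    (∀ (A₀ : A) (X : T) (f : F.obj A₀ ⟶ X),
      ∃ (Y : T) (g : Y ⟶ F.obj A₀) (h : X ⟶ Y⟦(1 : ℤ)⟧),
        Triangle.mk g f h ∈ distTriang T) ∧
    (∀ {Y Y' X X' : T} {A₀ A₁ : A}
      (g : Y ⟶ F.obj A₀) (f : F.obj A₀ ⟶ X) (h : X ⟶ Y⟦(1 : ℤ)⟧)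
      (g' : Y' ⟶ F.obj A₁) (f' : F.obj A₁ ⟶ X') (h' : X' ⟶ Y'⟦(1 : ℤ)⟧),
      (Triangle.mk g f h ∈ distTriang T) →
      (Triangle.mk g' f' h' ∈ distTriang T) →
      ∀ (a : A₀ ⟶ A₁) (b : X ⟶ X'), F.map a ≫ f' = f ≫ b →
        ∃ (c : Y ⟶ Y') (b₂ : X ⟶ X') (k : X ⟶ F.obj A₁),
          g ≫ F.map a = c ≫ g' ∧ F.map a ≫ f' = f ≫ b₂ ∧
          b₂ ≫ h' = h ≫ c⟦(1 : ℤ)⟧' ∧ b - b₂ = k ≫ f') ∧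
    (∀ {Y Y' X X' : T} {A₀ A₁ : A}
      (g : Y ⟶ F.obj A₀) (f : F.obj A₀ ⟶ X) (h : X ⟶ Y⟦(1 : ℤ)⟧)
      (g' : Y' ⟶ F.obj A₁) (f' : F.obj A₁ ⟶ X') (h' : X' ⟶ Y'⟦(1 : ℤ)⟧),
      (Triangle.mk g f h ∈ distTriang T) →
      (Triangle.mk g' f' h' ∈ distTriang T) →
      ∀ (c : Y ⟶ Y') (a : A₀ ⟶ A₁) (b : X ⟶ X'),
        g ≫ F.map a = c ≫ g' → F.map a ≫ f' = f ≫ b → b ≫ h' = h ≫ c⟦(1 : ℤ)⟧' →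
        ((a = 0 ∧ ∃ s : F.obj A₀ ⟶ Y', c = g ≫ s) ↔
         (a = 0 ∧ ∃ t : X ⟶ F.obj A₁, b = t ≫ f'))) := by
  refine ⟨fun _ _ f => distinguished_cocone_triangle₁ f, ?_, ?_⟩
  · intro Y Y' X X' A₀ A₁ g f h g' f' h' hT hT' a b hab
    -- (TR3) for rotated triangles lifts `(a, b)` itself, so `b₂ = b` and `k = 0`
    obtain ⟨c, hc₁, hc₃⟩ := complete_distinguished_triangle_morphism₁ _ _ hT hT' (F.map a) b
      hab.symm
    exact ⟨c, b, 0, hc₁, hab, hc₃.symm, by simp⟩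
  · intro Y Y' X X' A₀ A₁ g f h g' f' h' hT hT' c a b _ _ hbc
    exact and_congr_right fun _ =>
      Triangle.exists_eq_mor₁_comp_iff_exists_eq_comp_mor₂ hT hT' hbc.symm

/-- The induced cone functor `Cone : (T ↓ F)/LT → (F ↓ T)/RT` is an equivalence: it is
dense (every object `(A₀, X; f)` of `(F ↓ T)` is a cone), full (every morphism of
`(F ↓ T)` agrees modulo right trivial morphisms with one induced by a morphism of
`(T ↓ F)`), and faithful: in a (TR3) diagram relating two exact triangles, the morphism
`(c, a)` is left trivial iff the induced morphism `(a, b)` is right trivial. -/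
theorem cone_functor_equivalence (F : A ⥤ T) [F.Additive] :
    (∀ (A₀ : A) (X : T) (f : F.obj A₀ ⟶ X),
      ∃ (Y : T) (g : Y ⟶ F.obj A₀) (h : X ⟶ Y⟦(1 : ℤ)⟧),
        Triangle.mk g f h ∈ distTriang T) ∧
    (∀ {Y Y' X X' : T} {A₀ A₁ : A}
      (g : Y ⟶ F.obj A₀) (f : F.obj A₀ ⟶ X) (h : X ⟶ Y⟦(1 : ℤ)⟧)
      (g' : Y' ⟶ F.obj A₁) (f' : F.obj A₁ ⟶ X') (h' : X' ⟶ Y'⟦(1 : ℤ)⟧),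
      (Triangle.mk g f h ∈ distTriang T) →
      (Triangle.mk g' f' h' ∈ distTriang T) →
      ∀ (a : A₀ ⟶ A₁) (b : X ⟶ X'), F.map a ≫ f' = f ≫ b →
        ∃ (c : Y ⟶ Y') (b₂ : X ⟶ X') (k : X ⟶ F.obj A₁),
          g ≫ F.map a = c ≫ g' ∧ F.map a ≫ f' = f ≫ b₂ ∧
          b₂ ≫ h' = h ≫ c⟦(1 : ℤ)⟧' ∧ b - b₂ = k ≫ f') ∧
    (∀ {Y Y' X X' : T} {A₀ A₁ : A}
      (g : Y ⟶ F.obj A₀) (f : F.obj A₀ ⟶ X) (h : X ⟶ Y⟦(1 : ℤ)⟧)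
      (g' : Y' ⟶ F.obj A₁) (f' : F.obj A₁ ⟶ X') (h' : X' ⟶ Y'⟦(1 : ℤ)⟧),
      (Triangle.mk g f h ∈ distTriang T) →
      (Triangle.mk g' f' h' ∈ distTriang T) →
      ∀ (c : Y ⟶ Y') (a : A₀ ⟶ A₁) (b : X ⟶ X'),
        g ≫ F.map a = c ≫ g' → F.map a ≫ f' = f ≫ b → b ≫ h' = h ≫ c⟦(1 : ℤ)⟧' →
        ((a = 0 ∧ ∃ s : F.obj A₀ ⟶ Y', c = g ≫ s) ↔
         (a = 0 ∧ ∃ t : X ⟶ F.obj A₁, b = t ≫ f'))) :=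
  cone_functor_equivalence_general F
end

section
/- (Theorem A, fullness) Given a recollement (T', T, T''), the functor Φ : T → (i_ρ j_λ ↓ T') sending X to (j X, i_ρ X; i_ρ φ_X) and f to (j f, i_ρ f) is full: any morphism (a, b) : Φ(X) → Φ(Y) in the comma category lifts to a morphism f : X → Y with j f = a and i_ρ f = b. -/
open CategoryTheory Category Limits Pretriangulated Preadditive

/-- A recollement of triangulated categories, following [BBD 1.4]. -/
structure Recollement (T₁ T₂ T₃ : Type*)
    [Category T₁] [Category T₂] [Category T₃]
    [HasZeroObject T₁] [HasZeroObject T₂] [HasZeroObject T₃]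
    [Preadditive T₁] [Preadditive T₂] [Preadditive T₃]
    [HasShift T₁ ℤ] [HasShift T₂ ℤ] [HasShift T₃ ℤ]
    [∀ n : ℤ, (shiftFunctor T₁ n).Additive]
    [∀ n : ℤ, (shiftFunctor T₂ n).Additive]
    [∀ n : ℤ, (shiftFunctor T₃ n).Additive]
    [Pretriangulated T₁] [Pretriangulated T₂] [Pretriangulated T₃] where
  i : T₁ ⥤ T₂
  iL : T₂ ⥤ T₁
  iR : T₂ ⥤ T₁
  j : T₂ ⥤ T₃
  jL : T₃ ⥤ T₂
  jR : T₃ ⥤ T₂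
  i_commShift : i.CommShift ℤ
  iL_commShift : iL.CommShift ℤ
  iR_commShift : iR.CommShift ℤ
  j_commShift : j.CommShift ℤ
  jL_commShift : jL.CommShift ℤ
  jR_commShift : jR.CommShift ℤ
  i_isTriangulated : letI := i_commShift; i.IsTriangulated
  iL_isTriangulated : letI := iL_commShift; iL.IsTriangulated
  iR_isTriangulated : letI := iR_commShift; iR.IsTriangulated
  j_isTriangulated : letI := j_commShift; j.IsTriangulated
  jL_isTriangulated : letI := jL_commShift; jL.IsTriangulated
  jR_isTriangulated : letI := jR_commShift; jR.IsTriangulated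
  adj_iL : iL ⊣ i
  adj_iR : i ⊣ iR
  adj_jL : jL ⊣ j
  adj_jR : j ⊣ jR
  i_faithful : i.Faithful
  i_full : i.Full
  jL_faithful : jL.Faithful
  jL_full : jL.Full
  jR_faithful : jR.Faithful
  jR_full : jR.Full
  /-- the unit `ε' : Id → i_ρ i` is invertible (i.e. `i` is fully faithful) -/
  isIso_iR_unit : ∀ X : T₁, IsIso (adj_iR.unit.app X)
  /-- the counit `ψ' : i_λ i → Id` is invertible -/
  isIso_iL_counit : ∀ X : T₁, IsIso (adj_iL.counit.app X)
  /-- the unit `φ' : Id → j j_λ` is invertible (i.e. `j_λ` is fully faithful) -/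
  isIso_jL_unit : ∀ Y : T₃, IsIso (adj_jL.unit.app Y)
  /-- the counit `η' : j j_ρ → Id` is invertible (i.e. `j_ρ` is fully faithful) -/
  isIso_jR_counit : ∀ Y : T₃, IsIso (adj_jR.counit.app Y)
  ji_zero : ∀ X : T₁, IsZero (j.obj (i.obj X))
  /-- the connecting morphism `δ : j_ρ j → Σ i i_ρ` -/
  δ : ∀ X : T₂, jR.obj (j.obj X) ⟶ (i.obj (iR.obj X))⟦(1 : ℤ)⟧
  δ_natural : ∀ {X Y : T₂} (f : X ⟶ Y),
    jR.map (j.map f) ≫ δ Y = δ X ≫ (i.map (iR.map f))⟦(1 : ℤ)⟧'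
  /-- the functorial exact triangle `i i_ρ X → X → j_ρ j X → Σ i i_ρ X` -/
  tri₁ : ∀ X : T₂,
    Triangle.mk (adj_iR.counit.app X) (adj_jR.unit.app X) (δ X) ∈ distTriang T₂
  /-- the connecting morphism `σ : i i_λ → Σ j_λ j` -/
  σ : ∀ X : T₂, i.obj (iL.obj X) ⟶ (jL.obj (j.obj X))⟦(1 : ℤ)⟧
  σ_natural : ∀ {X Y : T₂} (f : X ⟶ Y),
    i.map (iL.map f) ≫ σ Y = σ X ≫ (jL.map (j.map f))⟦(1 : ℤ)⟧'
  /-- the functorial exact triangle `j_λ j X → X → i i_λ X → Σ j_λ j X` -/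
  tri₂ : ∀ X : T₂,
    Triangle.mk (adj_jL.counit.app X) (adj_iL.unit.app X) (σ X) ∈ distTriang T₂

variable {T₁ T₂ T₃ : Type*}
  [Category T₁] [Category T₂] [Category T₃]
  [HasZeroObject T₁] [HasZeroObject T₂] [HasZeroObject T₃]
  [Preadditive T₁] [Preadditive T₂] [Preadditive T₃]
  [HasShift T₁ ℤ] [HasShift T₂ ℤ] [HasShift T₃ ℤ]
  [∀ n : ℤ, (shiftFunctor T₁ n).Additive]
  [∀ n : ℤ, (shiftFunctor T₂ n).Additive]
  [∀ n : ℤ, (shiftFunctor T₃ n).Additive]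
  [Pretriangulated T₁] [Pretriangulated T₂] [Pretriangulated T₃]

/-!
Given `(a, b) : Φ X ⟶ Φ Y`, put `u := j_λ a ≫ φ_Y : j_λ j X ⟶ Y`. In the triangle
`j_λ j X → X → i i_λ X → Σ j_λ j X`, the obstruction to extending `u` along `φ_X` is a map
`Σ⁻¹ i i_λ X → Y`; by the adjunction `i ⊣ i_ρ` such a map vanishes once its `i_ρ`-image does,
and the compatibility of `(a, b)` kills that image. Any extension `f₁` satisfies `j f₁ = a`.
The error `b - i_ρ f₁` kills `i_ρ φ_X`, so by exactness of the `i_ρ`-image of the triangle it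
factors through `i_ρ` of the unit `X → i i_λ X`; as `i` is fully faithful, the factorisation lifts
to a map `h : X → Y` through `i i_λ X`, which `j` kills since `j i = 0`. Then `f₁ + h` is a lift.
-/

namespace CategoryTheory.Adjunction

variable {C D : Type*} [Category C] [Category D] {F : C ⥤ D} {G : D ⥤ C}

lemma map_eq_of_counit_comp_eq (adj : F ⊣ G) {X Y : D} {f : X ⟶ Y} {a : G.obj X ⟶ G.obj Y}
    (h : adj.counit.app X ≫ f = F.map a ≫ adj.counit.app Y) : G.map f = a := by
  apply (adj.homEquiv _ _).symm.injective
  rw [homEquiv_counit, homEquiv_counit, adj.counit_naturality, h]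

lemma exists_map_eq_of_isIso_unit (adj : F ⊣ G) {A : C} [IsIso (adj.unit.app A)] {Y : D}
    (s : G.obj (F.obj A) ⟶ G.obj Y) : ∃ t : F.obj A ⟶ Y, G.map t = s :=
  ⟨(adj.homEquiv _ _).symm (adj.unit.app A ≫ s), (cancel_epi (adj.unit.app A)).1 <|
    (adj.homEquiv_unit _ _ _).symm.trans ((adj.homEquiv _ _).apply_symm_apply _)⟩

lemma eq_zero_of_map_eq_zero [HasZeroMorphisms C] [HasZeroMorphisms D]
    [G.PreservesZeroMorphisms] (adj : F ⊣ G) {A : C} {Y : D} {g : F.obj A ⟶ Y}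
    (hg : G.map g = 0) : g = 0 :=
  (adj.homEquiv _ _).injective <| by
    rw [homEquiv_unit, hg, comp_zero, homEquiv_unit, G.map_zero, comp_zero]

end CategoryTheory.Adjunction

namespace Recollement

variable (R : Recollement T₁ T₂ T₃)

instance : R.i.CommShift ℤ := R.i_commShift
instance : R.iR.CommShift ℤ := R.iR_commShift
instance : R.j.CommShift ℤ := R.j_commShift
instance : R.iR.IsTriangulated := R.iR_isTriangulated
instance : R.j.IsTriangulated := R.j_isTriangulated

lemma eq_zero_of_iR_map_eq_zero {A : T₁} {Y : T₂} {g : (R.i.obj A)⟦(-1 : ℤ)⟧ ⟶ Y}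
    (hg : R.iR.map g = 0) : g = 0 := by
  rw [← cancel_epi ((R.i.commShiftIso (-1 : ℤ)).hom.app A), comp_zero]
  exact R.adj_iR.eq_zero_of_map_eq_zero (by rw [Functor.map_comp, hg, comp_zero])

lemma exists_counit_comp_eq {X Y : T₂} (u : R.jL.obj (R.j.obj X) ⟶ Y)
    (b : R.iR.obj X ⟶ R.iR.obj Y) (hu : R.iR.map u = R.iR.map (R.adj_jL.counit.app X) ≫ b) :
    ∃ f : X ⟶ Y, R.adj_jL.counit.app X ≫ f = u := by
  have hT := inv_rot_of_distTriang _ (R.tri₂ X)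
  obtain ⟨f, hf⟩ := Triangle.yoneda_exact₂ _ hT u <| R.eq_zero_of_iR_map_eq_zero <| by
    erw [Functor.map_comp, hu, ← assoc, ← Functor.map_comp, comp_distTriang_mor_zero₁₂ _ hT,
      Functor.map_zero, zero_comp]
  exact ⟨f, hf.symm⟩

lemma exists_j_map_eq_zero_and_iR_map_eq {X Y : T₂} (e : R.iR.obj X ⟶ R.iR.obj Y)
    (he : R.iR.map (R.adj_jL.counit.app X) ≫ e = 0) :
    ∃ h : X ⟶ Y, R.j.map h = 0 ∧ R.iR.map h = e := by
  obtain ⟨s, hs⟩ := Triangle.yoneda_exact₂ _ (R.iR.map_distinguished _ (R.tri₂ X)) e he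
  have := R.isIso_iR_unit (R.iL.obj X)
  obtain ⟨t, rfl⟩ := R.adj_iR.exists_map_eq_of_isIso_unit s
  refine ⟨R.adj_iL.unit.app X ≫ t, ?_, ?_⟩
  · rw [R.j.map_comp, (R.ji_zero _).eq_of_src (R.j.map t) 0, comp_zero]
  · rw [R.iR.map_comp, hs]
    rfl

end Recollement

/-- Theorem A, fullness: the functor `Φ : T → (i_ρ j_λ ↓ T')`, `X ↦ (j X, i_ρ X; i_ρ φ_X)`,
is full. -/
theorem comparison_functor_full (R : Recollement T₁ T₂ T₃) :
    ∀ (X Y : T₂) (a : R.j.obj X ⟶ R.j.obj Y) (b : R.iR.obj X ⟶ R.iR.obj Y),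
      R.iR.map (R.jL.map a) ≫ R.iR.map (R.adj_jL.counit.app Y) =
        R.iR.map (R.adj_jL.counit.app X) ≫ b →
      ∃ f : X ⟶ Y, R.j.map f = a ∧ R.iR.map f = b := by
  intro X Y a b hab
  obtain ⟨f, hf⟩ := R.exists_counit_comp_eq (Y := Y) (R.jL.map a ≫ R.adj_jL.counit.app Y) b
    (by rw [Functor.map_comp, hab])
  have hfb : R.iR.map (R.adj_jL.counit.app X) ≫ (b - R.iR.map f) = 0 := by
    rw [comp_sub, ← hab, ← Functor.map_comp, ← Functor.map_comp, hf, sub_self]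
  obtain ⟨h, hjh, hiRh⟩ := R.exists_j_map_eq_zero_and_iR_map_eq _ hfb
  refine ⟨f + h, ?_, ?_⟩
  · rw [R.j.map_add, R.adj_jL.map_eq_of_counit_comp_eq hf, hjh, add_zero]
  · rw [R.iR.map_add, hiRh, add_sub_cancel]
end

section
/- (Theorem A, denseness) Given a recollement (T', T, T''), the functor Φ : T → (i_ρ j_λ ↓ T') defined by Φ(X) = (j X, i_ρ X; i_ρ φ_X) is dense: every object (A, Z; f) of the comma category, with f : i_ρ j_λ A → Z in T', is isomorphic to Φ(C) where C is a cone of the morphism (i f, −ε_{j_λ A})ᵗ : i i_ρ j_λ A → i Z ⊕ j_λ A. -/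
open CategoryTheory Category Limits Pretriangulated Preadditive

variable {T₁ T₂ T₃ : Type*}
  [Category T₁] [Category T₂] [Category T₃]
  [HasZeroObject T₁] [HasZeroObject T₂] [HasZeroObject T₃]
  [Preadditive T₁] [Preadditive T₂] [Preadditive T₃]
  [HasShift T₁ ℤ] [HasShift T₂ ℤ] [HasShift T₃ ℤ]
  [∀ n : ℤ, (shiftFunctor T₁ n).Additive]
  [∀ n : ℤ, (shiftFunctor T₂ n).Additive]
  [∀ n : ℤ, (shiftFunctor T₃ n).Additive]
  [Pretriangulated T₁] [Pretriangulated T₂] [Pretriangulated T₃]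

/-! Applying `j` to the triangle kills `i i_ρ j_λ A` and `i Z`, so `j y` is invertible and
`a := φ'_A ≫ j y`. Applying `i_ρ`, the component `-i_ρ ε_{j_λ A}` of the first morphism becomes
invertible because `i` is fully faithful; a triangle whose first morphism has an invertible
component is split, so `i_ρ x` is invertible and `b := η_Z ≫ i_ρ x`. The compatibility square is
the adjunction identity applied to the relation `i f ≫ x = ε ≫ y` read off from the triangle. -/

namespace CategoryTheory

section Biprod

variable {C : Type*} [Category C] [Preadditive C]

instance isIso_neg {X Y : C} (f : X ⟶ Y) [IsIso f] : IsIso (-f) :=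
  ⟨-inv f, by simp, by simp⟩

variable [HasBinaryBiproducts C]

lemma isIso_biprod_desc_lift_inl {X Y W : C} (g : X ⟶ Y) (e : X ⟶ W) [IsIso e] :
    IsIso (biprod.desc (biprod.lift g e) biprod.inl : X ⊞ Y ⟶ Y ⊞ W) :=
  ⟨biprod.lift (biprod.snd ≫ inv e) (biprod.fst - biprod.snd ≫ inv e ≫ g),
    by ext <;> simp, by ext <;> simp⟩

lemma isIso_of_isIso_biprod_desc_of_isZero {X Y Z : C} (hX : IsZero X) (x : X ⟶ Z) (y : Y ⟶ Z)
    [IsIso (biprod.desc x y)] : IsIso y := by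
  rw [← biprod.inr_desc x y]
  have : IsIso (biprod.inr : Y ⟶ X ⊞ Y) := (isoZeroBiprod hX).isIso_hom
  infer_instance

end Biprod

lemma Adjunction.comp_unit_app_comp_map_eq {C D : Type*} [Category C] [Category D]
    {F : C ⥤ D} {G : D ⥤ C} (adj : F ⊣ G) {X W : D} {Z : C} (f : G.obj X ⟶ Z)
    (x : F.obj Z ⟶ W) (y : X ⟶ W) (h : F.map f ≫ x = adj.counit.app X ≫ y) :
    f ≫ adj.unit.app Z ≫ G.map x = G.map y := by
  rw [← adj.unit_naturality_assoc, ← G.map_comp, h, G.map_comp, adj.right_triangle_components_assoc]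

namespace Pretriangulated

variable {C : Type*} [Category C] [Preadditive C] [HasZeroObject C] [HasShift C ℤ]
  [∀ n : ℤ, (shiftFunctor C n).Additive] [Pretriangulated C]

section

variable {X Y W Z : C} {g : X ⟶ Y} {e : X ⟶ W} {x : Y ⟶ Z} {y : W ⟶ Z} {h : Z ⟶ X⟦(1 : ℤ)⟧}

lemma comp_add_comp_eq_zero_of_distTriang_biprod
    (hT : Triangle.mk (biprod.lift g e) (biprod.desc x y) h ∈ distTriang C) :
    g ≫ x + e ≫ y = 0 := by
  rw [← biprod.lift_desc]
  exact comp_distTriang_mor_zero₁₂ _ hT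

lemma comp_eq_zero_of_distTriang_biprod
    (hT : Triangle.mk (biprod.lift g e) (biprod.desc x y) h ∈ distTriang C) : x ≫ h = 0 := by
  rw [← biprod.inl_desc_assoc x y, ← comp_zero]
  exact biprod.inl ≫= comp_distTriang_mor_zero₂₃ _ hT

/-- The triangle is the split triangle `X → X ⊞ Y → Y → X⟦1⟧` after the change of coordinates
`(g e; 1 0)` of the middle term, which is invertible because `e` is. -/
lemma isIso_of_distTriang_biprod [IsIso e]
    (hT : Triangle.mk (biprod.lift g e) (biprod.desc x y) h ∈ distTriang C) : IsIso x := by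
  have hgx := comp_add_comp_eq_zero_of_distTriang_biprod hT
  have hxh := comp_eq_zero_of_distTriang_biprod hT
  let φ : binaryBiproductTriangle X Y ⟶ Triangle.mk (biprod.lift g e) (biprod.desc x y) h :=
    { hom₁ := 𝟙 X
      hom₂ := biprod.desc (biprod.lift g e) biprod.inl
      hom₃ := x
      comm₁ := by dsimp [binaryBiproductTriangle, Triangle.mk]; simp
      comm₂ := by
        dsimp [binaryBiproductTriangle, Triangle.mk]
        apply biprod.hom_ext' <;> simp [hgx]
      comm₃ := by dsimp [binaryBiproductTriangle, Triangle.mk]; simp [hxh] }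
  exact isIso₃_of_isIso₁₂ φ (binaryBiproductTriangle_distinguished X Y) hT
    (inferInstanceAs (IsIso (𝟙 X))) (isIso_biprod_desc_lift_inl g e)

end

end Pretriangulated

namespace Functor

variable {C D : Type*} [Category C] [Preadditive C] [HasZeroObject C] [HasShift C ℤ]
  [∀ n : ℤ, (shiftFunctor C n).Additive] [Pretriangulated C]
  [Category D] [Preadditive D] [HasZeroObject D] [HasShift D ℤ]
  [∀ n : ℤ, (shiftFunctor D n).Additive] [Pretriangulated D]
  (F : C ⥤ D) [F.CommShift ℤ] [F.IsTriangulated]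
  {X Y W Z : C} {g : X ⟶ Y} {e : X ⟶ W} {x : Y ⟶ Z} {y : W ⟶ Z} {h : Z ⟶ X⟦(1 : ℤ)⟧}

lemma map_distinguished_biprod
    (hT : Triangle.mk (biprod.lift g e) (biprod.desc x y) h ∈ distTriang C) :
    Triangle.mk (biprod.lift (F.map g) (F.map e)) (biprod.desc (F.map x) (F.map y))
      (F.map h ≫ (F.commShiftIso (1 : ℤ)).hom.app X) ∈ distTriang D := by
  have := preservesBinaryBiproducts_of_preservesBiproducts F
  refine isomorphic_distinguished _ (F.map_distinguished _ hT) _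
    (Triangle.isoMk _ _ (Iso.refl _) (F.mapBiprod Y W).symm (Iso.refl _) ?_ ?_ ?_)
  · dsimp [Triangle.mk, mapTriangle]
    rw [id_comp, biprod.lift_mapBiprod]
  · dsimp [Triangle.mk, mapTriangle]
    rw [comp_id, biprod.mapBiprod_inv_map_desc]
  · dsimp [Triangle.mk, mapTriangle]
    simp

lemma isIso_map_of_distTriang_biprod [IsIso (F.map e)]
    (hT : Triangle.mk (biprod.lift g e) (biprod.desc x y) h ∈ distTriang C) :
    IsIso (F.map x) :=
  isIso_of_distTriang_biprod (F.map_distinguished_biprod hT)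

lemma isIso_map_of_distTriang_biprod_of_isZero (hX : IsZero (F.obj X)) (hY : IsZero (F.obj Y))
    (hT : Triangle.mk (biprod.lift g e) (biprod.desc x y) h ∈ distTriang C) :
    IsIso (F.map y) := by
  have : IsIso (biprod.desc (F.map x) (F.map y)) :=
    (Triangle.isZero₁_iff_isIso₂ _ (F.map_distinguished_biprod hT)).1 hX
  exact isIso_of_isIso_biprod_desc_of_isZero hY (F.map x) (F.map y)

end Functor

end CategoryTheory

theorem comparison_functor_dense_general (R : Recollement T₁ T₂ T₃) :
    ∀ (A : T₃) (Z : T₁) (f : R.iR.obj (R.jL.obj A) ⟶ Z) (C : T₂)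
      (x : R.i.obj Z ⟶ C) (y : R.jL.obj A ⟶ C)
      (w : C ⟶ (R.i.obj (R.iR.obj (R.jL.obj A)))⟦(1 : ℤ)⟧),
      (Triangle.mk (biprod.lift (R.i.map f) (-(R.adj_iR.counit.app (R.jL.obj A))))
          (biprod.desc x y) w ∈ distTriang T₂) →
      ∃ (a : A ≅ R.j.obj C) (b : Z ≅ R.iR.obj C),
        R.iR.map (R.jL.map a.hom) ≫ R.iR.map (R.adj_jL.counit.app C) = f ≫ b.hom := by
  intro A Z f C x y w hT
  let := R.iR_commShift
  let := R.j_commShift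
  have := R.iR_isTriangulated
  have := R.j_isTriangulated
  have := R.i_full
  have := R.i_faithful
  have := R.isIso_jL_unit A
  have := R.isIso_iR_unit Z
  have : IsIso (R.iR.map (-(R.adj_iR.counit.app (R.jL.obj A)))) := by
    rw [R.iR.map_neg]
    infer_instance
  have := R.j.isIso_map_of_distTriang_biprod_of_isZero (R.ji_zero _) (R.ji_zero _) hT
  have := R.iR.isIso_map_of_distTriang_biprod hT
  have hcomp : R.i.map f ≫ x = R.adj_iR.counit.app (R.jL.obj A) ≫ y := by
    have := comp_add_comp_eq_zero_of_distTriang_biprod hT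
    rwa [neg_comp, ← sub_eq_add_neg, sub_eq_zero] at this
  refine ⟨asIso (R.adj_jL.unit.app A) ≪≫ asIso (R.j.map y),
    asIso (R.adj_iR.unit.app Z) ≪≫ asIso (R.iR.map x), ?_⟩
  rw [Iso.trans_hom, Iso.trans_hom, asIso_hom, asIso_hom, asIso_hom, asIso_hom, ← R.iR.map_comp,
    R.adj_iR.comp_unit_app_comp_map_eq f x y hcomp]
  simp

/-- Theorem A, denseness: every object `(A, Z; f)` of the comma category `(i_ρ j_λ ↓ T')`
is isomorphic to `Φ(C)`, where `C` is a cone of `(i f, −ε_{j_λ A})ᵗ : i i_ρ j_λ A → i Z ⊕ j_λ A`. -/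
theorem comparison_functor_dense (R : Recollement T₁ T₂ T₃) [HasBinaryBiproducts T₂] :
    ∀ (A : T₃) (Z : T₁) (f : R.iR.obj (R.jL.obj A) ⟶ Z) (C : T₂)
      (x : R.i.obj Z ⟶ C) (y : R.jL.obj A ⟶ C)
      (w : C ⟶ (R.i.obj (R.iR.obj (R.jL.obj A)))⟦(1 : ℤ)⟧),
      (Triangle.mk (biprod.lift (R.i.map f) (-(R.adj_iR.counit.app (R.jL.obj A))))
          (biprod.desc x y) w ∈ distTriang T₂) →
      ∃ (a : A ≅ R.j.obj C) (b : Z ≅ R.iR.obj C),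
        R.iR.map (R.jL.map a.hom) ≫ R.iR.map (R.adj_jL.counit.app C) = f ≫ b.hom :=
  comparison_functor_dense_general R
end

section
/- Given a recollement (T', T, T''), for any objects X, Y ∈ T there is an exact sequence of abelian groups Hom_T(Σ i i_ρ j_λ j X, Y) → Hom_T(X, Y) → Hom_{(i_ρ j_λ ↓ T')}(Φ X, Φ Y) → 0, where the second map is induced by the functor Φ : X ↦ (j X, i_ρ X; i_ρ φ_X). -/
/-!
The functorial triangle `i i_ρ X → X → j_ρ j X → Σ i i_ρ X` does all the work.
Fullness of `Φ`: `j` inverts the counit `c_X : j_λ j X → X`, and the compatibility of `(a, b)`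
says that `i_ρ` of the adjoint transpose `j_λ j X → Y` of `a` is `i_ρ c_X ≫ b`; naturality of
`δ` along these two maps shows that `(i b, j_ρ a)` commutes with the connecting morphisms, and
completing it to a morphism of triangles gives the required preimage.
Kernel: if `j f = 0` then `f` factors through `i i_ρ Y`; if moreover `i_ρ f = 0`, the factor
vanishes on `i i_ρ X`, so it factors through `j_ρ j X ≅ j_ρ j j_λ j X`, and as there are no
nonzero maps `j_λ (-) → i (-)`, the triangle of `j_λ j X` makes it pass through `δ`.
-/

open CategoryTheory Category Limits Pretriangulated Preadditive

variable {T₁ T₂ T₃ : Type*}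
  [Category T₁] [Category T₂] [Category T₃]
  [HasZeroObject T₁] [HasZeroObject T₂] [HasZeroObject T₃]
  [Preadditive T₁] [Preadditive T₂] [Preadditive T₃]
  [HasShift T₁ ℤ] [HasShift T₂ ℤ] [HasShift T₃ ℤ]
  [∀ n : ℤ, (shiftFunctor T₁ n).Additive]
  [∀ n : ℤ, (shiftFunctor T₂ n).Additive]
  [∀ n : ℤ, (shiftFunctor T₃ n).Additive]
  [Pretriangulated T₁] [Pretriangulated T₂] [Pretriangulated T₃]

namespace CategoryTheory.Adjunction

variable {C D : Type*} [Category C] [Category D] {F : C ⥤ D} {G : D ⥤ C}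

lemma map_map_comp_counit_app (adj : F ⊣ G) {X Y : D} [Epi (adj.unit.app (G.obj X))]
    (a : G.obj X ⟶ G.obj Y) :
    G.map (F.map a ≫ adj.counit.app Y) = G.map (adj.counit.app X) ≫ a := by
  rw [← cancel_epi (adj.unit.app (G.obj X))]
  simp

end CategoryTheory.Adjunction

namespace Recollement

variable (R : Recollement T₁ T₂ T₃)

attribute [instance] i_full i_faithful jL_full jL_faithful

instance : R.iR.IsRightAdjoint := R.adj_iR.isRightAdjoint
instance : R.jR.IsRightAdjoint := R.adj_jR.isRightAdjoint

lemma hom_jL_i_eq_zero {A : T₃} {B : T₁} (h : R.jL.obj A ⟶ R.i.obj B) : h = 0 :=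
  (R.adj_jL.homEquiv _ _).injective ((R.ji_zero B).eq_of_tgt _ _)

lemma hom_i_jR_eq_zero {A : T₁} {B : T₃} (h : R.i.obj A ⟶ R.jR.obj B) : h = 0 :=
  (R.adj_jR.homEquiv _ _).symm.injective ((R.ji_zero A).eq_of_src _ _)

lemma isZero_iR_obj_jR_obj (B : T₃) : IsZero (R.iR.obj (R.jR.obj B)) :=
  (IsZero.iff_id_eq_zero _).mpr <| (R.adj_iR.homEquiv _ _).symm.injective <|
    (R.hom_i_jR_eq_zero _).trans (R.hom_i_jR_eq_zero _).symm

lemma isZero_j_obj_shift_i_obj (W : T₁) : IsZero (R.j.obj ((R.i.obj W)⟦(1 : ℤ)⟧)) := by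
  let := R.j_commShift
  exact ((shiftFunctor T₃ (1 : ℤ)).map_isZero (R.ji_zero W)).of_iso
    ((R.j.commShiftIso (1 : ℤ)).app _)

def mayerVietorisδ (X : T₂) : X ⟶ (R.i.obj (R.iR.obj (R.jL.obj (R.j.obj X))))⟦(1 : ℤ)⟧ :=
  R.adj_jR.unit.app X ≫ R.jR.map (R.adj_jL.unit.app (R.j.obj X)) ≫ R.δ (R.jL.obj (R.j.obj X))

lemma j_map_mayerVietorisδ (X : T₂) : R.j.map (R.mayerVietorisδ X) = 0 :=
  (R.isZero_j_obj_shift_i_obj _).eq_of_tgt _ _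

lemma iR_map_mayerVietorisδ (X : T₂) : R.iR.map (R.mayerVietorisδ X) = 0 := by
  rw [mayerVietorisδ, Functor.map_comp, Functor.map_comp,
    (R.isZero_iR_obj_jR_obj _).eq_of_tgt (R.iR.map (R.jR.map _)) 0, zero_comp, comp_zero]

lemma exists_eq_comp_counit_of_j_map_eq_zero {X Y : T₂} (f : X ⟶ Y) (hf : R.j.map f = 0) :
    ∃ u : X ⟶ R.i.obj (R.iR.obj Y), f = u ≫ R.adj_iR.counit.app Y :=
  have hη : f ≫ R.adj_jR.unit.app Y = 0 := by
    rw [← R.adj_jR.unit_naturality, hf, Functor.map_zero, comp_zero]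
  Triangle.coyoneda_exact₂ _ (R.tri₁ Y) f hη

lemma exists_eq_unit_comp_of_iR_map_eq_zero {X : T₂} {W : T₁} (u : X ⟶ R.i.obj W)
    (hu : R.iR.map u = 0) : ∃ s : R.jR.obj (R.j.obj X) ⟶ R.i.obj W, u = R.adj_jR.unit.app X ≫ s :=
  have hε : R.adj_iR.counit.app X ≫ u = 0 := (R.adj_iR.homEquiv _ _).injective <| by
    rw [Adjunction.homEquiv_unit, Adjunction.homEquiv_unit, Functor.map_comp,
      Adjunction.right_triangle_components_assoc, hu, Functor.map_zero, comp_zero]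
  Triangle.yoneda_exact₂ _ (R.tri₁ X) u hε

lemma exists_eq_jR_map_unit_comp_δ_comp {X : T₂} {W : T₁} (s : R.jR.obj (R.j.obj X) ⟶ R.i.obj W) :
    ∃ t, s = R.jR.map (R.adj_jL.unit.app (R.j.obj X)) ≫ R.δ (R.jL.obj (R.j.obj X)) ≫ t := by
  let e := R.jR.mapIso (asIso (R.adj_jL.unit.app (R.j.obj X)))
  obtain ⟨t, ht⟩ := Triangle.yoneda_exact₃ _ (R.tri₁ (R.jL.obj (R.j.obj X))) (e.inv ≫ s)
    (R.hom_jL_i_eq_zero _)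
  exact ⟨t, (Iso.inv_comp_eq e).mp ht⟩

lemma exists_eq_mayerVietorisδ_comp {X Y : T₂} (f : X ⟶ Y) (hj : R.j.map f = 0)
    (hi : R.iR.map f = 0) : ∃ t, f = R.mayerVietorisδ X ≫ t := by
  obtain ⟨u, rfl⟩ := R.exists_eq_comp_counit_of_j_map_eq_zero f hj
  have hu : R.iR.map u = 0 := by
    rw [← cancel_mono (R.iR.map (R.adj_iR.counit.app Y)), ← Functor.map_comp, hi, zero_comp]
  obtain ⟨s, rfl⟩ := R.exists_eq_unit_comp_of_iR_map_eq_zero u hu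
  obtain ⟨t, rfl⟩ := R.exists_eq_jR_map_unit_comp_δ_comp s
  exact ⟨t ≫ R.adj_iR.counit.app Y, by simp [mayerVietorisδ]⟩

lemma j_map_eq_zero_and_iR_map_eq_zero_iff {X Y : T₂} (f : X ⟶ Y) :
    (R.j.map f = 0 ∧ R.iR.map f = 0) ↔ ∃ t, f = R.mayerVietorisδ X ≫ t := by
  refine ⟨fun ⟨hj, hi⟩ ↦ R.exists_eq_mayerVietorisδ_comp f hj hi, ?_⟩
  rintro ⟨t, rfl⟩
  simp [j_map_mayerVietorisδ, iR_map_mayerVietorisδ]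

lemma δ_comp_shift_map_i_map {X Y : T₂} (a : R.j.obj X ⟶ R.j.obj Y)
    (b : R.iR.obj X ⟶ R.iR.obj Y)
    (H : R.iR.map (R.jL.map a) ≫ R.iR.map (R.adj_jL.counit.app Y) =
      R.iR.map (R.adj_jL.counit.app X) ≫ b) :
    R.δ X ≫ (R.i.map b)⟦(1 : ℤ)⟧' = R.jR.map a ≫ R.δ Y := by
  let g := R.jL.map a ≫ R.adj_jL.counit.app Y
  have hg : R.iR.map g = R.iR.map (R.adj_jL.counit.app X) ≫ b := by
    rw [← H, ← Functor.map_comp]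
  rw [← cancel_epi (R.jR.map (R.j.map (R.adj_jL.counit.app X)))]
  calc _ = R.δ (R.jL.obj (R.j.obj X)) ≫ (R.i.map (R.iR.map g))⟦(1 : ℤ)⟧' := by
        rw [reassoc_of% (R.δ_natural (R.adj_jL.counit.app X)), hg, Functor.map_comp,
          Functor.map_comp]
    _ = R.jR.map (R.j.map g) ≫ R.δ Y := (R.δ_natural g).symm
    _ = _ := by rw [R.adj_jL.map_map_comp_counit_app, Functor.map_comp, assoc]

lemma exists_hom_j_map_eq_iR_map_eq {X Y : T₂} (a : R.j.obj X ⟶ R.j.obj Y)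
    (b : R.iR.obj X ⟶ R.iR.obj Y)
    (H : R.iR.map (R.jL.map a) ≫ R.iR.map (R.adj_jL.counit.app Y) =
      R.iR.map (R.adj_jL.counit.app X) ≫ b) :
    ∃ f : X ⟶ Y, R.j.map f = a ∧ R.iR.map f = b := by
  obtain ⟨f, hi, hj⟩ : ∃ f : X ⟶ Y,
      R.adj_iR.counit.app X ≫ f = R.i.map b ≫ R.adj_iR.counit.app Y ∧
        R.adj_jR.unit.app X ≫ R.jR.map a = f ≫ R.adj_jR.unit.app Y :=
    complete_distinguished_triangle_morphism₂ _ _ (R.tri₁ X) (R.tri₁ Y)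
      (R.i.map b) (R.jR.map a) (R.δ_comp_shift_map_i_map a b H)
  refine ⟨f, (R.adj_jR.homEquiv _ _).injective ?_, ?_⟩
  · rw [Adjunction.homEquiv_unit, Adjunction.homEquiv_unit, R.adj_jR.unit_naturality]
    exact hj.symm
  · have := (R.adj_iR.unit_comp_map_eq_iff _ b).mpr hi
    rwa [Functor.map_comp, Adjunction.right_triangle_components_assoc] at this

end Recollement

/-- For each `X, Y ∈ T` there is an exact sequence
`Hom(Σ i i_ρ j_λ j X, Y) → Hom(X, Y) → Hom(Φ X, Φ Y) → 0`,
the first map being precomposition with `δ_{j_λ j X} ∘ j_ρ φ'_{j X} ∘ η_X` and the second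
induced by `Φ`. Exactness is expressed as surjectivity of `Φ` on Hom-groups and the
kernel of `Φ` being the image of the first map. -/
theorem hom_exact_sequence (R : Recollement T₁ T₂ T₃) :
    ∀ X Y : T₂,
      (∀ (a : R.j.obj X ⟶ R.j.obj Y) (b : R.iR.obj X ⟶ R.iR.obj Y),
        R.iR.map (R.jL.map a) ≫ R.iR.map (R.adj_jL.counit.app Y) =
          R.iR.map (R.adj_jL.counit.app X) ≫ b →
        ∃ f : X ⟶ Y, R.j.map f = a ∧ R.iR.map f = b) ∧
      (∀ f : X ⟶ Y,
        (R.j.map f = 0 ∧ R.iR.map f = 0) ↔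
        ∃ t : (R.i.obj (R.iR.obj (R.jL.obj (R.j.obj X))))⟦(1 : ℤ)⟧ ⟶ Y,
          f = (R.adj_jR.unit.app X ≫ R.jR.map (R.adj_jL.unit.app (R.j.obj X)) ≫
            R.δ (R.jL.obj (R.j.obj X))) ≫ t) :=
  fun _ _ ↦ ⟨R.exists_hom_j_map_eq_iR_map_eq, R.j_map_eq_zero_and_iR_map_eq_zero_iff⟩
end

section
/- Let i : T → T₁ be a morphic enhancement with (i_ρ, j_λ) an adjoint pair. Then (j_ρ, Σ⁻¹ i_λ) is an adjoint pair, and its unit ζ' : Id_T → (Σ⁻¹ i_λ) j_ρ can be chosen so that (ζ')⁻¹ = θ' ∘ Σ⁻¹ ξ, where ξ : i_λ j_ρ → Σ i_ρ j_λ is the intertwining isomorphism of the recollement and θ' : i_ρ j_λ → Id is the counit of (i_ρ, j_λ). -/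
open CategoryTheory Category Limits Pretriangulated Preadditive

variable {T₀ T₁ : Type*}
  [Category T₀] [Category T₁]
  [HasZeroObject T₀] [HasZeroObject T₁]
  [Preadditive T₀] [Preadditive T₁]
  [HasShift T₀ ℤ] [HasShift T₁ ℤ]
  [∀ n : ℤ, (shiftFunctor T₀ n).Additive]
  [∀ n : ℤ, (shiftFunctor T₁ n).Additive]
  [Pretriangulated T₀] [Pretriangulated T₁]

/-!
An adjunction is determined by a unit with the universal property, so with
`θ := θ' ∘ Σ⁻¹ξ : Σ⁻¹ i_λ j_ρ → Id` it suffices that `θ` is invertible (`θ'` is, as `j_λ` is fully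
faithful) and that `f ↦ θ⁻¹ ≫ Σ⁻¹ i_λ f` is bijective on `j_ρ X ⟶ Y`.

`ξ_X` is the third component of a morphism from the triangle `j_λ j j_ρ X → j_ρ X → i i_λ j_ρ X`
to the rotated triangle `j_λ X → j_ρ j j_λ X → Σ i i_ρ j_λ X` whose second component `j_ρ φ'` is
invertible; its first component lies in the image of the fully faithful `j_λ` and becomes
invertible after applying `j`, hence is invertible.

Since `i_ρ j_ρ = 0`, the adjunction `(i_ρ, j_λ)` kills all morphisms `j_ρ X → j_λ W` and, `j_λ`
commuting with `Σ`, all `j_ρ X → Σ j_λ W`. So the triangle `j_λ j Y → Y → i i_λ Y` shows that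
composing with the unit `Y → i i_λ Y` is bijective on morphisms out of `j_ρ X`, i.e. that `i_λ`
is bijective on them.
-/

noncomputable def CategoryTheory.Adjunction.ofUnitBijective {C D : Type*} [Category C]
    [Category D] {F : C ⥤ D} {G : D ⥤ C} (η : 𝟭 C ⟶ F ⋙ G)
    (hη : ∀ X Y, Function.Bijective fun f : F.obj X ⟶ Y => η.app X ≫ G.map f) : F ⊣ G :=
  Adjunction.mkOfHomEquiv
    { homEquiv := fun X Y => Equiv.ofBijective _ (hη X Y)
      homEquiv_naturality_left_symm := fun {X' X Y} f g => by
        apply (Equiv.ofBijective _ (hη X' Y)).injective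
        have hg := (Equiv.ofBijective _ (hη X Y)).apply_symm_apply g
        rw [Equiv.ofBijective_apply] at hg
        rw [Equiv.apply_symm_apply, Equiv.ofBijective_apply, Functor.map_comp,
          ← Functor.comp_map, ← η.naturality_assoc, Functor.id_map, hg]
      homEquiv_naturality_right := fun f g => by simp }

lemma CategoryTheory.Adjunction.ofUnitBijective_unit {C D : Type*} [Category C] [Category D]
    {F : C ⥤ D} {G : D ⥤ C} (η : 𝟭 C ⟶ F ⋙ G)
    (hη : ∀ X Y, Function.Bijective fun f : F.obj X ⟶ Y => η.app X ≫ G.map f) :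
    (Adjunction.ofUnitBijective η hη).unit = η := by
  ext X
  simp [Adjunction.ofUnitBijective]

lemma CategoryTheory.Adjunction.isIso_of_isIso_rightAdjoint_map {C D : Type*} [Category C]
    [Category D] {L : C ⥤ D} {R : D ⥤ C} (adj : L ⊣ R) [L.Full] [L.Faithful] {A B : C}
    (f : L.obj A ⟶ L.obj B) [IsIso (R.map f)] : IsIso f := by
  obtain ⟨g, rfl⟩ := L.map_surjective f
  have : IsIso g := (NatIso.isIso_map_iff (asIso adj.unit) g).mpr ‹IsIso (R.map (L.map g))›
  infer_instance

lemma CategoryTheory.Pretriangulated.bijective_comp_mor₂ {C : Type*} [Category C]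
    [Preadditive C] [HasZeroObject C] [HasShift C ℤ] [∀ n : ℤ, (shiftFunctor C n).Additive]
    [Pretriangulated C] {T : Triangle C} (hT : T ∈ distTriang C) {A : C}
    (h₁ : ∀ f : A ⟶ T.obj₁, f = 0) (h₃ : ∀ f : A ⟶ T.obj₁⟦(1 : ℤ)⟧, f = 0) :
    Function.Bijective fun f : A ⟶ T.obj₂ => f ≫ T.mor₂ := by
  refine ⟨fun f g hfg => ?_, fun g => ?_⟩
  · obtain ⟨q, hq⟩ := T.coyoneda_exact₂ hT (f - g) (by rw [sub_comp]; exact sub_eq_zero.mpr hfg)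
    rw [← sub_eq_zero, hq, h₁ q, zero_comp]
  · obtain ⟨f, hf⟩ := T.coyoneda_exact₃ hT g (h₃ _)
    exact ⟨f, hf.symm⟩

section

variable {C₁ C₂ C₃ : Type*} [Category C₁] [Category C₂] [Category C₃]
  [HasZeroObject C₁] [HasZeroObject C₂] [HasZeroObject C₃]
  [Preadditive C₁] [Preadditive C₂] [Preadditive C₃]
  [HasShift C₁ ℤ] [HasShift C₂ ℤ] [HasShift C₃ ℤ]
  [∀ n : ℤ, (shiftFunctor C₁ n).Additive] [∀ n : ℤ, (shiftFunctor C₂ n).Additive]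
  [∀ n : ℤ, (shiftFunctor C₃ n).Additive]
  [Pretriangulated C₁] [Pretriangulated C₂] [Pretriangulated C₃]

lemma Recollement.isZero_iR_obj_jR_obj_s15 (R : Recollement C₁ C₂ C₃) (X : C₃) :
    IsZero (R.iR.obj (R.jR.obj X)) := by
  have := R.i_full; have := R.i_faithful; have := R.jR_full; have := R.jR_faithful
  exact IsZero.of_full_of_faithful_of_isZero R.i _
    (Triangle.isZero₁_of_isIso₂ _ (R.tri₁ (R.jR.obj X)) (inferInstance :
      IsIso (R.adj_jR.unit.app (R.jR.obj X))))

end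

namespace Recollement

lemma isIso_intertwiner (R : Recollement T₀ T₁ T₀)
    (ξ : R.jR ⋙ R.iL ⟶ R.jL ⋙ R.iR ⋙ shiftFunctor T₀ (1 : ℤ))
    (hξ : ∀ Y : T₀, R.adj_iL.unit.app (R.jR.obj Y) ≫ R.i.map (ξ.app Y) ≫
        (Functor.CommShift.commShiftIso (self := R.i_commShift) R.i (1 : ℤ)).hom.app
          (R.iR.obj (R.jL.obj Y)) =
      R.jR.map (R.adj_jL.unit.app Y) ≫ R.δ (R.jL.obj Y)) :
    IsIso ξ := by
  let _ := R.i_commShift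
  have := R.i_full; have := R.i_faithful; have := R.jL_full; have := R.jL_faithful
  have := R.jR_full; have := R.jR_faithful
  suffices ∀ X, IsIso (ξ.app X) from NatIso.isIso_of_isIso_app ξ
  intro X
  have := R.isIso_jL_unit X
  obtain ⟨a, ha₁, ha₃⟩ := complete_distinguished_triangle_morphism₁ _ _
    (R.tri₂ (R.jR.obj X)) (rot_of_distTriang _ (R.tri₁ (R.jL.obj X)))
    (R.jR.map (R.adj_jL.unit.app X))
    (R.i.map (ξ.app X) ≫ (R.i.commShiftIso (1 : ℤ)).hom.app _) (hξ X)
  change R.jL.obj (R.j.obj (R.jR.obj X)) ⟶ R.jL.obj X at a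
  change R.adj_jL.counit.app (R.jR.obj X) ≫ R.jR.map (R.adj_jL.unit.app X) =
    a ≫ R.adj_jR.unit.app (R.jL.obj X) at ha₁
  have : IsIso (R.j.map a) := by
    have : IsIso (R.j.map (a ≫ R.adj_jR.unit.app (R.jL.obj X))) := by
      rw [← ha₁, Functor.map_comp]
      infer_instance
    rw [Functor.map_comp] at this
    exact IsIso.of_isIso_comp_right _ (R.j.map (R.adj_jR.unit.app (R.jL.obj X)))
  have := R.adj_jL.isIso_of_isIso_rightAdjoint_map a
  have : IsIso (R.i.map (ξ.app X) ≫ (R.i.commShiftIso (1 : ℤ)).hom.app _) :=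
    isIso₃_of_isIso₁₂ (Triangle.homMk _ _ a _ _ ha₁ (hξ X) ha₃)
      (R.tri₂ _) (rot_of_distTriang _ (R.tri₁ _)) (by assumption)
      (by exact Functor.map_isIso R.jR (R.adj_jL.unit.app X))
  have := IsIso.of_isIso_comp_right (R.i.map (ξ.app X)) ((R.i.commShiftIso (1 : ℤ)).hom.app _)
  exact isIso_of_fully_faithful R.i _

lemma hom_jR_jL_eq_zero {R : Recollement T₀ T₁ T₀} (adjRL : R.iR ⊣ R.jL) {X W : T₀}
    (f : R.jR.obj X ⟶ R.jL.obj W) : f = 0 :=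
  (adjRL.homEquiv _ _).symm.injective ((R.isZero_iR_obj_jR_obj_s15 X).eq_of_src _ _)

lemma hom_jR_shift_jL_eq_zero {R : Recollement T₀ T₁ T₀} (adjRL : R.iR ⊣ R.jL) {X W : T₀}
    (f : R.jR.obj X ⟶ (R.jL.obj W)⟦(1 : ℤ)⟧) : f = 0 := by
  let _ := R.jL_commShift
  rw [← cancel_mono ((R.jL.commShiftIso (1 : ℤ)).inv.app W), zero_comp]
  exact hom_jR_jL_eq_zero adjRL _

lemma iL_map_bijective_of_jR {R : Recollement T₀ T₁ T₀} (adjRL : R.iR ⊣ R.jL) (X : T₀)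
    (Y : T₁) :
    Function.Bijective (R.iL.map : (R.jR.obj X ⟶ Y) → _) := by
  have h : R.adj_iL.homEquiv _ _ ∘ R.iL.map =
      fun f : R.jR.obj X ⟶ Y => f ≫ R.adj_iL.unit.app Y := by
    funext f
    simp [Adjunction.homEquiv_unit]
  rw [← Function.Bijective.of_comp_iff' (R.adj_iL.homEquiv _ _).bijective, h]
  exact bijective_comp_mor₂ (R.tri₂ Y) (hom_jR_jL_eq_zero adjRL) (hom_jR_shift_jL_eq_zero adjRL)

end Recollement

/-- For a morphic enhancement (a recollement `(T, T₁, T)` with `(i_ρ, j_λ)` adjoint with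
counit `θ'`), the pair `(j_ρ, Σ⁻¹ i_λ)` is adjoint, and its unit `ζ'` can be chosen to be
the inverse of `θ' ∘ Σ⁻¹ξ`, where `ξ : i_λ j_ρ → Σ i_ρ j_λ` is the intertwining
isomorphism. -/
theorem morphic_enhancement_jR_iL_adjunction
    (R : Recollement T₀ T₁ T₀)
    (adjRL : R.iR ⊣ R.jL)
    (ξ : R.jR ⋙ R.iL ⟶ R.jL ⋙ R.iR ⋙ shiftFunctor T₀ (1 : ℤ))
    (hξ : ∀ Y : T₀,
      R.adj_iL.unit.app (R.jR.obj Y) ≫ R.i.map (ξ.app Y) ≫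
          (Functor.CommShift.commShiftIso (self := R.i_commShift) R.i (1 : ℤ)).hom.app (R.iR.obj (R.jL.obj Y)) =
        R.jR.map (R.adj_jL.unit.app Y) ≫ R.δ (R.jL.obj Y)) :
    ∃ adj' : R.jR ⊣ R.iL ⋙ shiftFunctor T₀ (-1 : ℤ),
      ∀ X : T₀,
        adj'.unit.app X ≫ (ξ.app X)⟦(-1 : ℤ)⟧' ≫
            (shiftFunctorCompIsoId T₀ (1 : ℤ) (-1 : ℤ) (by omega)).hom.app
              (R.iR.obj (R.jL.obj X)) ≫ adjRL.counit.app X = 𝟙 X ∧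
        ((ξ.app X)⟦(-1 : ℤ)⟧' ≫
            (shiftFunctorCompIsoId T₀ (1 : ℤ) (-1 : ℤ) (by omega)).hom.app
              (R.iR.obj (R.jL.obj X)) ≫ adjRL.counit.app X) ≫ adj'.unit.app X =
          𝟙 ((R.iL ⋙ shiftFunctor T₀ (-1 : ℤ)).obj (R.jR.obj X)) := by
  have := R.jL_full; have := R.jL_faithful
  have := R.isIso_intertwiner ξ hξ
  let θ : R.jR ⋙ R.iL ⋙ shiftFunctor T₀ (-1 : ℤ) ≅ 𝟭 T₀ :=
    asIso (Functor.whiskerRight ξ (shiftFunctor T₀ (-1 : ℤ)) ≫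
      Functor.whiskerLeft (R.jL ⋙ R.iR) (shiftFunctorCompIsoId T₀ (1 : ℤ) (-1 : ℤ) (by omega)).hom ≫
      adjRL.counit)
  have hθ : ∀ X Y, Function.Bijective fun f : R.jR.obj X ⟶ Y =>
      θ.inv.app X ≫ (R.iL ⋙ shiftFunctor T₀ (-1 : ℤ)).map f := fun X Y =>
    ((isIso_iff_coyoneda_map_bijective _).mp inferInstance _).comp
      (((Functor.FullyFaithful.ofFullyFaithful (shiftFunctor T₀ (-1 : ℤ))).map_bijective _ _).comp
        (R.iL_map_bijective_of_jR adjRL X Y))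
  refine ⟨Adjunction.ofUnitBijective θ.inv hθ, fun X => ?_⟩
  rw [Adjunction.ofUnitBijective_unit]
  exact ⟨θ.inv_hom_id_app X, θ.hom_inv_id_app X⟩
end
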